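/- The calculi G3 and G3^φ are equivalent: a sequent Γ ⇒ φ is derivable in the full calculus G3 (for any of N, NeF, CoPC, MPC) if and only if it is derivable in the restricted calculus G3^φ in which the goal (succedent) of every left rule is required to be an atom, a negation, or a disjunction. -/
import Mathlib


inductive Fml where
  | var : Nat → Fml
  | top : Fml
  | and : Fml → Fml → Fml
  | or  : Fml → Fml → Fml
  | imp : Fml → Fml → Fml
  | neg : Fml → Fml
deriving DecidableEq

/-- Names for the four possible negation rules. -/
inductive NegRule where
  | n | nef | copc | an
deriving DecidableEq

/-- `Der R Γ φ k`: the sequent `Γ ⇒ φ` is derivable with height at most `k`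
in the G3 calculus whose negation rules are those satisfying `R`.
Axioms are available at every height; each rule adds one to the height. -/
inductive Der (R : NegRule → Prop) : Multiset Fml → Fml → Nat → Prop where
  | ax (Γ : Multiset Fml) (p k) : Der R (Fml.var p ::ₘ Γ) (Fml.var p) k
  | top (Γ : Multiset Fml) (k) : Der R Γ Fml.top k
  | andR {Γ α β k} : Der R Γ α k → Der R Γ β k → Der R Γ (Fml.and α β) (k+1)
  | andL {Γ α β φ k} : Der R (α ::ₘ β ::ₘ Γ) φ k → Der R (Fml.and α β ::ₘ Γ) φ (k+1)
  | orR1 {Γ α β k} : Der R Γ α k → Der R Γ (Fml.or α β) (k+1)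
  | orR2 {Γ α β k} : Der R Γ β k → Der R Γ (Fml.or α β) (k+1)
  | orL {Γ α β φ k} : Der R (α ::ₘ Γ) φ k → Der R (β ::ₘ Γ) φ k →
      Der R (Fml.or α β ::ₘ Γ) φ (k+1)
  | impR {Γ α β k} : Der R (α ::ₘ Γ) β k → Der R Γ (Fml.imp α β) (k+1)
  | impL {Γ α β φ k} : Der R (Fml.imp α β ::ₘ Γ) α k → Der R (β ::ₘ Γ) φ k →
      Der R (Fml.imp α β ::ₘ Γ) φ (k+1)
  | nrule {Γ α β k} : R NegRule.n → Der R (β ::ₘ Fml.neg α ::ₘ Γ) α k →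
      Der R (α ::ₘ Fml.neg α ::ₘ Γ) β k → Der R (Fml.neg α ::ₘ Γ) (Fml.neg β) (k+1)
  | nef {Γ α β k} : R NegRule.nef → Der R (Fml.neg α ::ₘ Γ) α k →
      Der R (Fml.neg α ::ₘ Γ) (Fml.neg β) (k+1)
  | copc {Γ α β k} : R NegRule.copc → Der R (β ::ₘ Fml.neg α ::ₘ Γ) α k →
      Der R (Fml.neg α ::ₘ Γ) (Fml.neg β) (k+1)
  | an {Γ α k} : R NegRule.an → Der R (α ::ₘ Γ) (Fml.neg α) k → Der R Γ (Fml.neg α) (k+1)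

/-- The calculus G3-N. -/
def NCalc : NegRule → Prop := fun r => r = NegRule.n
/-- The calculus G3-NeF. -/
def NeFCalc : NegRule → Prop := fun r => r = NegRule.nef
/-- The calculus G3-CoPC. -/
def CoPCCalc : NegRule → Prop := fun r => r = NegRule.copc
/-- The calculus G3-MPC (contraposition plus (AN)). -/
def MPCCalc : NegRule → Prop := fun r => r = NegRule.copc ∨ r = NegRule.an

/-- Derivability (at some height). -/
def Derivable (R : NegRule → Prop) (Γ : Multiset Fml) (φ : Fml) : Prop := ∃ k, Der R Γ φ k

/-- The allowed goals of left rules in the restricted calculus `G3^φ`: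
atoms, negations, and disjunctions. -/
def GoalOK : Fml → Prop := fun φ =>
  (∃ p, φ = Fml.var p) ∨ (∃ α, φ = Fml.neg α) ∨ (∃ α β, φ = Fml.or α β)

/-- The restricted calculus `G3^φ`: as `Der`, but every left rule may only be
applied when the succedent is an atom, a negation or a disjunction.
(The negation rules have a negated succedent, hence satisfy this automatically.) -/
inductive DerPhi (R : NegRule → Prop) : Multiset Fml → Fml → Prop where
  | ax (Γ : Multiset Fml) (p) : DerPhi R (Fml.var p ::ₘ Γ) (Fml.var p)
  | top (Γ : Multiset Fml) : DerPhi R Γ Fml.top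
  | andR {Γ α β} : DerPhi R Γ α → DerPhi R Γ β → DerPhi R Γ (Fml.and α β)
  | andL {Γ α β φ} : GoalOK φ → DerPhi R (α ::ₘ β ::ₘ Γ) φ →
      DerPhi R (Fml.and α β ::ₘ Γ) φ
  | orR1 {Γ α β} : DerPhi R Γ α → DerPhi R Γ (Fml.or α β)
  | orR2 {Γ α β} : DerPhi R Γ β → DerPhi R Γ (Fml.or α β)
  | orL {Γ α β φ} : GoalOK φ → DerPhi R (α ::ₘ Γ) φ → DerPhi R (β ::ₘ Γ) φ →
      DerPhi R (Fml.or α β ::ₘ Γ) φ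
  | impR {Γ α β} : DerPhi R (α ::ₘ Γ) β → DerPhi R Γ (Fml.imp α β)
  | impL {Γ α β φ} : GoalOK φ → DerPhi R (Fml.imp α β ::ₘ Γ) α →
      DerPhi R (β ::ₘ Γ) φ → DerPhi R (Fml.imp α β ::ₘ Γ) φ
  | nrule {Γ α β} : R NegRule.n → DerPhi R (β ::ₘ Fml.neg α ::ₘ Γ) α →
      DerPhi R (α ::ₘ Fml.neg α ::ₘ Γ) β → DerPhi R (Fml.neg α ::ₘ Γ) (Fml.neg β)
  | nef {Γ α β} : R NegRule.nef → DerPhi R (Fml.neg α ::ₘ Γ) α →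
      DerPhi R (Fml.neg α ::ₘ Γ) (Fml.neg β)
  | copc {Γ α β} : R NegRule.copc → DerPhi R (β ::ₘ Fml.neg α ::ₘ Γ) α →
      DerPhi R (Fml.neg α ::ₘ Γ) (Fml.neg β)
  | an {Γ α} : R NegRule.an → DerPhi R (α ::ₘ Γ) (Fml.neg α) →
      DerPhi R Γ (Fml.neg α)

section Aux

variable {R : NegRule → Prop}

/-- Height can be lifted. -/
lemma Der.lift : ∀ {Γ φ k}, Der R Γ φ k → ∀ {m}, k ≤ m → Der R Γ φ m := by
  intro Γ φ k h
  induction h with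
  | ax Γ p k => intro m _; exact Der.ax Γ p m
  | top Γ k => intro m _; exact Der.top Γ m
  | andR _ _ ih1 ih2 =>
    intro m hm; obtain ⟨m, rfl⟩ : ∃ m', m = m' + 1 := ⟨m - 1, by omega⟩
    exact Der.andR (ih1 (by omega)) (ih2 (by omega))
  | andL _ ih =>
    intro m hm; obtain ⟨m, rfl⟩ : ∃ m', m = m' + 1 := ⟨m - 1, by omega⟩
    exact Der.andL (ih (by omega))
  | orR1 _ ih =>
    intro m hm; obtain ⟨m, rfl⟩ : ∃ m', m = m' + 1 := ⟨m - 1, by omega⟩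
    exact Der.orR1 (ih (by omega))
  | orR2 _ ih =>
    intro m hm; obtain ⟨m, rfl⟩ : ∃ m', m = m' + 1 := ⟨m - 1, by omega⟩
    exact Der.orR2 (ih (by omega))
  | orL _ _ ih1 ih2 =>
    intro m hm; obtain ⟨m, rfl⟩ : ∃ m', m = m' + 1 := ⟨m - 1, by omega⟩
    exact Der.orL (ih1 (by omega)) (ih2 (by omega))
  | impR _ ih =>
    intro m hm; obtain ⟨m, rfl⟩ : ∃ m', m = m' + 1 := ⟨m - 1, by omega⟩
    exact Der.impR (ih (by omega))
  | impL _ _ ih1 ih2 =>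
    intro m hm; obtain ⟨m, rfl⟩ : ∃ m', m = m' + 1 := ⟨m - 1, by omega⟩
    exact Der.impL (ih1 (by omega)) (ih2 (by omega))
  | nrule hR _ _ ih1 ih2 =>
    intro m hm; obtain ⟨m, rfl⟩ : ∃ m', m = m' + 1 := ⟨m - 1, by omega⟩
    exact Der.nrule hR (ih1 (by omega)) (ih2 (by omega))
  | nef hR _ ih =>
    intro m hm; obtain ⟨m, rfl⟩ : ∃ m', m = m' + 1 := ⟨m - 1, by omega⟩
    exact Der.nef hR (ih (by omega))
  | copc hR _ ih =>
    intro m hm; obtain ⟨m, rfl⟩ : ∃ m', m = m' + 1 := ⟨m - 1, by omega⟩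
    exact Der.copc hR (ih (by omega))
  | an hR _ ih =>
    intro m hm; obtain ⟨m, rfl⟩ : ∃ m', m = m' + 1 := ⟨m - 1, by omega⟩
    exact Der.an hR (ih (by omega))

/-- Height-preserving weakening. -/
lemma Der.weak {Γ φ k} (Δ : Multiset Fml) (h : Der R Γ φ k) : Der R (Δ + Γ) φ k := by
  induction h with
  | ax Γ p k => rw [Multiset.add_cons]; exact Der.ax _ p k
  | top Γ k => exact Der.top _ k
  | andR _ _ ih1 ih2 => exact Der.andR ih1 ih2
  | andL _ ih =>
    rw [Multiset.add_cons]
    exact Der.andL (by simpa only [Multiset.add_cons] using ih)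
  | orR1 _ ih => exact Der.orR1 ih
  | orR2 _ ih => exact Der.orR2 ih
  | orL _ _ ih1 ih2 =>
    rw [Multiset.add_cons]
    exact Der.orL (by simpa only [Multiset.add_cons] using ih1)
      (by simpa only [Multiset.add_cons] using ih2)
  | impR _ ih => exact Der.impR (by simpa only [Multiset.add_cons] using ih)
  | impL _ _ ih1 ih2 =>
    rw [Multiset.add_cons]
    exact Der.impL (by simpa only [Multiset.add_cons] using ih1)
      (by simpa only [Multiset.add_cons] using ih2)
  | nrule hR _ _ ih1 ih2 =>
    rw [Multiset.add_cons]
    exact Der.nrule hR (by simpa only [Multiset.add_cons] using ih1)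
      (by simpa only [Multiset.add_cons] using ih2)
  | nef hR _ ih =>
    rw [Multiset.add_cons]
    exact Der.nef hR (by simpa only [Multiset.add_cons] using ih)
  | copc hR _ ih =>
    rw [Multiset.add_cons]
    exact Der.copc hR (by simpa only [Multiset.add_cons] using ih)
  | an hR _ ih =>
    exact Der.an hR (by simpa only [Multiset.add_cons] using ih)

lemma Der.weak1 {Γ φ k} (ψ : Fml) (h : Der R Γ φ k) : Der R (ψ ::ₘ Γ) φ k := by
  simpa only [Multiset.singleton_add] using Der.weak {ψ} h

/-- Height-preserving invertibility of (∧R). -/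
lemma Der.inv_and : ∀ {Γ φ k}, Der R Γ φ k → ∀ α β, φ = Fml.and α β →
    Der R Γ α k ∧ Der R Γ β k := by
  intro Γ φ k h
  induction h with
  | ax _ _ _ => intro α β hh; cases hh
  | top _ _ => intro α β hh; cases hh
  | andR h1 h2 _ _ =>
    rintro α β ⟨rfl, rfl⟩
    exact ⟨h1.lift (by omega), h2.lift (by omega)⟩
  | andL _ ih =>
    intro α β hh
    obtain ⟨i1, i2⟩ := ih α β hh
    exact ⟨Der.andL i1, Der.andL i2⟩
  | orR1 _ _ => intro α β hh; cases hh
  | orR2 _ _ => intro α β hh; cases hh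
  | orL _ _ ih1 ih2 =>
    intro α β hh
    obtain ⟨i1, i2⟩ := ih1 α β hh
    obtain ⟨j1, j2⟩ := ih2 α β hh
    exact ⟨Der.orL i1 j1, Der.orL i2 j2⟩
  | impR _ _ => intro α β hh; cases hh
  | impL h1 _ _ ih2 =>
    intro α β hh
    obtain ⟨i1, i2⟩ := ih2 α β hh
    exact ⟨Der.impL h1 i1, Der.impL h1 i2⟩
  | nrule _ _ _ _ _ => intro α β hh; cases hh
  | nef _ _ _ => intro α β hh; cases hh
  | copc _ _ _ => intro α β hh; cases hh
  | an _ _ _ => intro α β hh; cases hh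

/-- Height-preserving invertibility of (→R). -/
lemma Der.inv_imp : ∀ {Γ φ k}, Der R Γ φ k → ∀ α β, φ = Fml.imp α β →
    Der R (α ::ₘ Γ) β k := by
  intro Γ φ k h
  induction h with
  | ax _ _ _ => intro α β hh; cases hh
  | top _ _ => intro α β hh; cases hh
  | andR _ _ _ _ => intro α β hh; cases hh
  | @andL Γ a b ψ k _ ih =>
    intro α β hh
    rw [Multiset.cons_swap]
    refine Der.andL ?_
    have h' := ih α β hh
    rwa [Multiset.cons_swap α a, Multiset.cons_swap α b] at h'
  | orR1 _ _ => intro α β hh; cases hh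
  | orR2 _ _ => intro α β hh; cases hh
  | @orL Γ a b ψ k _ _ ih1 ih2 =>
    intro α β hh
    rw [Multiset.cons_swap]
    have h1 := ih1 α β hh
    have h2 := ih2 α β hh
    rw [Multiset.cons_swap α a] at h1
    rw [Multiset.cons_swap α b] at h2
    exact Der.orL h1 h2
  | @impR Γ a b k hp _ =>
    intro α β hh
    cases hh
    exact hp.lift (by omega)
  | @impL Γ a b ψ k h1 _ _ ih2 =>
    intro α β hh
    rw [Multiset.cons_swap]
    have h2 := ih2 α β hh
    rw [Multiset.cons_swap α b] at h2
    have h1' := Der.weak1 α h1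
    rw [Multiset.cons_swap α (Fml.imp a b)] at h1'
    exact Der.impL h1' h2
  | nrule _ _ _ _ _ => intro α β hh; cases hh
  | nef _ _ _ => intro α β hh; cases hh
  | copc _ _ _ => intro α β hh; cases hh
  | an _ _ _ => intro α β hh; cases hh

/-- Size of a formula. -/
def Fml.sz : Fml → Nat
  | .var _ => 1
  | .top => 1
  | .and a b => a.sz + b.sz + 1
  | .or a b => a.sz + b.sz + 1
  | .imp a b => a.sz + b.sz + 1
  | .neg a => a.sz + 1

lemma Fml.sz_pos (φ : Fml) : 1 ≤ φ.sz := by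
  cases φ <;> simp [Fml.sz]

/-- The hard direction: from `G3` to `G3^φ`. -/
lemma der_to_phi : ∀ (k : Nat) (Γ : Multiset Fml) (φ : Fml), Der R Γ φ k → DerPhi R Γ φ := by
  intro k
  induction k with
  | zero =>
    intro Γ φ h
    cases h with
    | ax Γ p _ => exact DerPhi.ax Γ p
    | top Γ _ => exact DerPhi.top Γ
  | succ k ihk =>
    have inner : ∀ (n : Nat) (Γ : Multiset Fml) (φ : Fml), φ.sz ≤ n →
        Der R Γ φ (k + 1) → DerPhi R Γ φ := by
      intro n
      induction n with
      | zero => intro Γ φ hsz _; have := φ.sz_pos; omega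
      | succ n ihn =>
        intro Γ φ hsz h
        match φ with
        | Fml.top => exact DerPhi.top Γ
        | Fml.and α β =>
          obtain ⟨h1, h2⟩ := h.inv_and α β rfl
          have hα := α.sz_pos; have hβ := β.sz_pos
          simp only [Fml.sz] at hsz
          exact DerPhi.andR (ihn Γ α (by omega) h1) (ihn Γ β (by omega) h2)
        | Fml.imp α β =>
          have h' := h.inv_imp α β rfl
          have hα := α.sz_pos; have hβ := β.sz_pos
          simp only [Fml.sz] at hsz
          exact DerPhi.impR (ihn _ β (by omega) h')
        | Fml.var p =>
          have hOK : GoalOK (Fml.var p) := Or.inl ⟨p, rfl⟩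
          cases h with
          | ax Γ _ _ => exact DerPhi.ax Γ p
          | andL h1 => exact DerPhi.andL hOK (ihk _ _ h1)
          | orL h1 h2 => exact DerPhi.orL hOK (ihk _ _ h1) (ihk _ _ h2)
          | impL h1 h2 => exact DerPhi.impL hOK (ihk _ _ h1) (ihk _ _ h2)
        | Fml.or α β =>
          have hOK : GoalOK (Fml.or α β) := Or.inr (Or.inr ⟨α, β, rfl⟩)
          cases h with
          | orR1 h1 => exact DerPhi.orR1 (ihk _ _ h1)
          | orR2 h1 => exact DerPhi.orR2 (ihk _ _ h1)
          | andL h1 => exact DerPhi.andL hOK (ihk _ _ h1)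
          | orL h1 h2 => exact DerPhi.orL hOK (ihk _ _ h1) (ihk _ _ h2)
          | impL h1 h2 => exact DerPhi.impL hOK (ihk _ _ h1) (ihk _ _ h2)
        | Fml.neg α =>
          have hOK : GoalOK (Fml.neg α) := Or.inr (Or.inl ⟨α, rfl⟩)
          cases h with
          | nrule hR h1 h2 => exact DerPhi.nrule hR (ihk _ _ h1) (ihk _ _ h2)
          | nef hR h1 => exact DerPhi.nef hR (ihk _ _ h1)
          | copc hR h1 => exact DerPhi.copc hR (ihk _ _ h1)
          | an hR h1 => exact DerPhi.an hR (ihk _ _ h1)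
          | andL h1 => exact DerPhi.andL hOK (ihk _ _ h1)
          | orL h1 h2 => exact DerPhi.orL hOK (ihk _ _ h1) (ihk _ _ h2)
          | impL h1 h2 => exact DerPhi.impL hOK (ihk _ _ h1) (ihk _ _ h2)
    intro Γ φ h
    exact inner φ.sz Γ φ le_rfl h

/-- The easy direction: from `G3^φ` to `G3`. -/
lemma phi_to_der : ∀ {Γ : Multiset Fml} {φ : Fml}, DerPhi R Γ φ → Derivable R Γ φ := by
  intro Γ φ h
  induction h with
  | ax Γ p => exact ⟨0, Der.ax Γ p 0⟩
  | top Γ => exact ⟨0, Der.top Γ 0⟩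
  | andR _ _ ih1 ih2 =>
    obtain ⟨k1, h1⟩ := ih1; obtain ⟨k2, h2⟩ := ih2
    exact ⟨max k1 k2 + 1, Der.andR (h1.lift (le_max_left _ _)) (h2.lift (le_max_right _ _))⟩
  | andL _ _ ih =>
    obtain ⟨k, h⟩ := ih; exact ⟨k + 1, Der.andL h⟩
  | orR1 _ ih => obtain ⟨k, h⟩ := ih; exact ⟨k + 1, Der.orR1 h⟩
  | orR2 _ ih => obtain ⟨k, h⟩ := ih; exact ⟨k + 1, Der.orR2 h⟩
  | orL _ _ _ ih1 ih2 =>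
    obtain ⟨k1, h1⟩ := ih1; obtain ⟨k2, h2⟩ := ih2
    exact ⟨max k1 k2 + 1, Der.orL (h1.lift (le_max_left _ _)) (h2.lift (le_max_right _ _))⟩
  | impR _ ih => obtain ⟨k, h⟩ := ih; exact ⟨k + 1, Der.impR h⟩
  | impL _ _ _ ih1 ih2 =>
    obtain ⟨k1, h1⟩ := ih1; obtain ⟨k2, h2⟩ := ih2
    exact ⟨max k1 k2 + 1, Der.impL (h1.lift (le_max_left _ _)) (h2.lift (le_max_right _ _))⟩
  | nrule hR _ _ ih1 ih2 =>
    obtain ⟨k1, h1⟩ := ih1; obtain ⟨k2, h2⟩ := ih2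
    exact ⟨max k1 k2 + 1, Der.nrule hR (h1.lift (le_max_left _ _)) (h2.lift (le_max_right _ _))⟩
  | nef hR _ ih => obtain ⟨k, h⟩ := ih; exact ⟨k + 1, Der.nef hR h⟩
  | copc hR _ ih => obtain ⟨k, h⟩ := ih; exact ⟨k + 1, Der.copc hR h⟩
  | an hR _ ih => obtain ⟨k, h⟩ := ih; exact ⟨k + 1, Der.an hR h⟩

end Aux

/-- The calculi `G3` and `G3^φ` are equivalent, for each of N, NeF, CoPC, MPC. -/
theorem G3_equiv_G3phi :
    ∀ (C : NegRule → Prop),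
      (C = NCalc ∨ C = NeFCalc ∨ C = CoPCCalc ∨ C = MPCCalc) →
      ∀ (Γ : Multiset Fml) (φ : Fml),
        Derivable C Γ φ ↔ DerPhi C Γ φ := by
  intro C _ Γ φ
  constructor
  · rintro ⟨k, h⟩
    exact der_to_phi k Γ φ h
  · exact phi_to_der
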